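/- arXiv:2212.09546 — 3 statements merged into one kernel-verified Lean document; each statement's English description precedes it below -/
import Mathlib

section
/- Let F, G : ℝ → ℝ be differentiable functions with F'(0) = 0, define θ(x,y) = 2 arctan(F(x)G(y)), and let w : ℝ² → ℝ be a differentiable function with w(0,0) = 0 satisfying the Bäcklund equation ∂w/∂y + ∂θ/∂x = −2 cosh(w) cos(θ) on ℝ². Then for every y ∈ ℝ, tanh(w(0,y)/2) = −tan(∫₀^y cos θ(0,s) ds), and |∫₀^y cos θ(0,s) ds| < π/4. -/
/-!
Along the line `x = 0` the hypothesis `F'(0) = 0` kills `∂θ/∂x`, so the Bäcklund equation becomes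
the ODE `u' = -2 cosh u · cos θ(0, ·)` for `u y = w (0, y)`. Since
`d/dt arctan (tanh (t / 2)) = 1 / (2 cosh t)` (the Gudermannian), this integrates to
`Y = -arctan (tanh (u / 2))`, and `|tanh| < 1` bounds `|Y|` by `arctan 1 = π / 4`.
-/

/-- First partial derivative (in the x-direction) of a function on ℝ². -/
noncomputable def pdx (f : ℝ × ℝ → ℝ) (p : ℝ × ℝ) : ℝ := fderiv ℝ f p (1, 0)

/-- Second partial derivative (in the y-direction) of a function on ℝ². -/
noncomputable def pdy (f : ℝ × ℝ → ℝ) (p : ℝ × ℝ) : ℝ := fderiv ℝ f p (0, 1)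

open Real

theorem hasDerivAt_pdx {f : ℝ × ℝ → ℝ} {p : ℝ × ℝ} (hf : DifferentiableAt ℝ f p) :
    HasDerivAt (fun x => f (x, p.2)) (pdx f p) p.1 :=
  hf.hasFDerivAt.comp_hasDerivAt p.1 ((hasDerivAt_id p.1).prodMk (hasDerivAt_const p.1 p.2))

theorem hasDerivAt_pdy {f : ℝ × ℝ → ℝ} {p : ℝ × ℝ} (hf : DifferentiableAt ℝ f p) :
    HasDerivAt (fun y => f (p.1, y)) (pdy f p) p.2 :=
  hf.hasFDerivAt.comp_hasDerivAt p.2 ((hasDerivAt_const p.2 p.1).prodMk (hasDerivAt_id p.2))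

theorem Real.hasDerivAt_tanh (x : ℝ) : HasDerivAt tanh (1 / cosh x ^ 2) x := by
  have h : HasDerivAt (fun x => sinh x / cosh x) _ x :=
    (hasDerivAt_sinh x).div (hasDerivAt_cosh x) (cosh_pos x).ne'
  simp only [← tanh_eq_sinh_div_cosh] at h
  convert h using 1
  rw [← cosh_sq_sub_sinh_sq x]
  ring

theorem HasDerivAt.arctan_tanh_half {u : ℝ → ℝ} {u' y : ℝ} (hu : HasDerivAt u u' y) :
    HasDerivAt (fun y => Real.arctan (tanh (u y / 2))) (u' / (2 * Real.cosh (u y))) y := by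
  refine ((hasDerivAt_tanh (u y / 2)).comp y (hu.div_const 2)).arctan.congr_deriv ?_
  have hcosh : Real.cosh (u y) = Real.cosh (u y / 2) ^ 2 + Real.sinh (u y / 2) ^ 2 := by
    rw [← cosh_two_mul, mul_div_cancel₀ _ two_ne_zero]
  have hc := (cosh_pos (u y / 2)).ne'
  rw [hcosh, Function.comp_apply, tanh_eq_sinh_div_cosh]
  field_simp

theorem abs_arctan_lt_pi_div_four {x : ℝ} (hx : |x| < 1) : |arctan x| < π / 4 := by
  rw [abs_lt] at hx ⊢
  rw [← arctan_one, ← arctan_neg]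
  exact ⟨arctan_strictMono hx.1, arctan_strictMono hx.2⟩

theorem integral_eq_neg_arctan_tanh_half {u c : ℝ → ℝ}
    (hu : ∀ y, HasDerivAt u (-2 * cosh (u y) * c y) y) (hc : Continuous c) (hu0 : u 0 = 0)
    (y : ℝ) : ∫ s in (0 : ℝ)..y, c s = -arctan (tanh (u y / 2)) := by
  have hderiv : ∀ s, HasDerivAt (fun s => -arctan (tanh (u s / 2))) (c s) s := fun s => by
    refine (hu s).arctan_tanh_half.neg.congr_deriv ?_
    field_simp [(cosh_pos (u s)).ne']
  rw [intervalIntegral.integral_eq_sub_of_hasDerivAt (fun s _ => hderiv s)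
    (hc.intervalIntegrable 0 y), hu0]
  simp

theorem tanh_half_eq_neg_tan_integral {u c : ℝ → ℝ}
    (hu : ∀ y, HasDerivAt u (-2 * cosh (u y) * c y) y) (hc : Continuous c) (hu0 : u 0 = 0)
    (y : ℝ) :
    tanh (u y / 2) = -tan (∫ s in (0 : ℝ)..y, c s) ∧ |∫ s in (0 : ℝ)..y, c s| < π / 4 := by
  rw [integral_eq_neg_arctan_tanh_half hu hc hu0, tan_neg, tan_arctan, neg_neg, abs_neg]
  exact ⟨rfl, abs_arctan_lt_pi_div_four (abs_tanh_lt_one _)⟩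

theorem stmt_10 (F G : ℝ → ℝ) (hF : Differentiable ℝ F) (hG : Differentiable ℝ G)
    (hF'0 : deriv F 0 = 0)
    (θ : ℝ × ℝ → ℝ) (hθ : ∀ p : ℝ × ℝ, θ p = 2 * Real.arctan (F p.1 * G p.2))
    (w : ℝ × ℝ → ℝ) (hw : Differentiable ℝ w) (hw0 : w (0, 0) = 0)
    (hB2 : ∀ p : ℝ × ℝ, pdy w p + pdx θ p = -2 * Real.cosh (w p) * Real.cos (θ p)) :
    ∀ y : ℝ,
      Real.tanh (w (0, y) / 2) = -Real.tan (∫ s in (0 : ℝ)..y, Real.cos (θ (0, s))) ∧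
      |∫ s in (0 : ℝ)..y, Real.cos (θ (0, s))| < Real.pi / 4 := by
  obtain rfl : θ = fun p => 2 * arctan (F p.1 * G p.2) := funext hθ
  have hθdiff : Differentiable ℝ fun p : ℝ × ℝ => 2 * arctan (F p.1 * G p.2) :=
    (((hF.comp differentiable_fst).mul (hG.comp differentiable_snd)).arctan).const_mul 2
  have hpdx : ∀ y, pdx (fun p : ℝ × ℝ => 2 * arctan (F p.1 * G p.2)) (0, y) = 0 := fun y => by
    have h := (((hF 0).hasDerivAt.mul_const (G y)).arctan).const_mul 2
    rw [hF'0, zero_mul, mul_zero, mul_zero] at h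
    exact (hasDerivAt_pdx (hθdiff (0, y))).unique h
  refine tanh_half_eq_neg_tan_integral (fun y => ?_)
    (continuous_cos.comp (hθdiff.continuous.comp (by fun_prop))) hw0
  convert hasDerivAt_pdy (hw (0, y)) using 1
  linarith [hB2 (0, y), hpdx y]
end

section
/- Let W = {(x,y) ∈ ℝ² : √2·|sinh(√2·y)| < 2 cosh(√2·x) − √2·sinh(√2·x)}. Then the function w : W → ℝ defined by w(x,y) = 2 arctanh( √2·sinh(√2·y) / (√2·sinh(√2·x) − 2 cosh(√2·x)) ) satisfies the elliptic sinh-Gordon equation Δw = 2 sinh(2w) on W. -/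
/-- Laplacian of a function on ℝ². -/
noncomputable def lap (f : ℝ × ℝ → ℝ) (p : ℝ × ℝ) : ℝ := pdx (pdx f) p + pdy (pdy f) p

/-- The inverse hyperbolic tangent, defined on (−1,1). -/
noncomputable def artanh (x : ℝ) : ℝ := (1 / 2) * Real.log ((1 + x) / (1 - x))

/-!
Write `a(x) = √2 sinh(√2 x) - 2 cosh(√2 x)`, which is negative, and `b(y) = √2 sinh(√2 y)`;
then `w = 2 artanh (b / a) = log ((a + b) / (a - b))`. Both `a` and `b` solve `f'' = 2 f`, with
first integrals `a'² - 2a² = -4` and `b'² - 2b² = 4`, so `a'² + b'² = 2 (a² + b²)`. For any such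
pair the terms of `Δw` involving `a''` and `b''` cancel, and the first integral turns the rest into
`8ab (a² + b²) / (a² - b²)² = 2 sinh 2w`.
-/

open Real hiding artanh
open Filter Topology

section PartialDerivatives

variable {f g : ℝ × ℝ → ℝ} {p : ℝ × ℝ}

lemma pdx_congr (h : f =ᶠ[𝓝 p] g) : pdx f =ᶠ[𝓝 p] pdx g :=
  (h.fderiv (𝕜 := ℝ)).mono fun _ hq => by simp only [pdx, hq]

lemma pdy_congr (h : f =ᶠ[𝓝 p] g) : pdy f =ᶠ[𝓝 p] pdy g :=
  (h.fderiv (𝕜 := ℝ)).mono fun _ hq => by simp only [pdy, hq]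

lemma lap_congr (h : f =ᶠ[𝓝 p] g) : lap f p = lap g p := by
  rw [lap, lap, (pdx_congr (pdx_congr h)).eq_of_nhds, (pdy_congr (pdy_congr h)).eq_of_nhds]

lemma pdx_eq_of_hasFDerivAt {f' : ℝ × ℝ →L[ℝ] ℝ} (h : HasFDerivAt f f' p) :
    pdx f p = f' (1, 0) := by
  rw [pdx, h.fderiv]

lemma pdy_eq_of_hasFDerivAt {f' : ℝ × ℝ →L[ℝ] ℝ} (h : HasFDerivAt f f' p) :
    pdy f p = f' (0, 1) := by
  rw [pdy, h.fderiv]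

end PartialDerivatives

-- Valid for every `r`: `log` only sees `|r|`, and at `r = 0` both sides are `0`.
lemma sinh_two_mul_log (r : ℝ) : sinh (2 * log r) = (r ^ 2 - (r ^ 2)⁻¹) / 2 := by
  rcases eq_or_ne r 0 with rfl | hr
  · simp
  have hlog : 2 * log r = log (r ^ 2) := by rw [log_pow]; norm_num
  rw [sinh_eq, exp_neg, hlog, exp_log (by positivity)]

lemma two_mul_artanh_div {x : ℝ} (hx : x ≠ 0) (y : ℝ) :
    2 * artanh (y / x) = log ((x + y) / (x - y)) := by
  rw [artanh, one_add_div hx, one_sub_div hx, div_div_div_cancel_right₀ hx]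
  ring

section Separable

open ContinuousLinearMap

variable {a a' b b' : ℝ → ℝ} {p : ℝ × ℝ}

lemma pdx_log_sub_log (ha : HasDerivAt a (a' p.1) p.1) (hb : HasDerivAt b (b' p.2) p.2)
    (hs : a p.1 + b p.2 ≠ 0) (hd : a p.1 - b p.2 ≠ 0) :
    pdx (fun q : ℝ × ℝ => log (a q.1 + b q.2) - log (a q.1 - b q.2)) p
      = a' p.1 * ((a p.1 + b p.2)⁻¹ - (a p.1 - b p.2)⁻¹) := by
  have hx := ha.comp_hasFDerivAt p (hasFDerivAt_fst (𝕜 := ℝ))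
  have hy := hb.comp_hasFDerivAt p (hasFDerivAt_snd (𝕜 := ℝ))
  refine (pdx_eq_of_hasFDerivAt (((hx.add hy).log hs).sub ((hx.sub hy).log hd))).trans ?_
  simp only [Function.comp_apply, Pi.add_apply, Pi.sub_apply, add_apply, sub_apply, smul_apply,
    coe_fst', coe_snd', smul_eq_mul]
  ring

lemma pdy_log_sub_log (ha : HasDerivAt a (a' p.1) p.1) (hb : HasDerivAt b (b' p.2) p.2)
    (hs : a p.1 + b p.2 ≠ 0) (hd : a p.1 - b p.2 ≠ 0) :
    pdy (fun q : ℝ × ℝ => log (a q.1 + b q.2) - log (a q.1 - b q.2)) p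
      = b' p.2 * ((a p.1 + b p.2)⁻¹ + (a p.1 - b p.2)⁻¹) := by
  have hx := ha.comp_hasFDerivAt p (hasFDerivAt_fst (𝕜 := ℝ))
  have hy := hb.comp_hasFDerivAt p (hasFDerivAt_snd (𝕜 := ℝ))
  refine (pdy_eq_of_hasFDerivAt (((hx.add hy).log hs).sub ((hx.sub hy).log hd))).trans ?_
  simp only [Function.comp_apply, Pi.add_apply, Pi.sub_apply, add_apply, sub_apply, smul_apply,
    coe_fst', coe_snd', smul_eq_mul]
  ring

lemma pdx_mul_inv_sub_inv {a'' : ℝ} (ha : HasDerivAt a (a' p.1) p.1)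
    (ha' : HasDerivAt a' a'' p.1) (hb : HasDerivAt b (b' p.2) p.2)
    (hs : a p.1 + b p.2 ≠ 0) (hd : a p.1 - b p.2 ≠ 0) :
    pdx (fun q : ℝ × ℝ => a' q.1 * ((a q.1 + b q.2)⁻¹ - (a q.1 - b q.2)⁻¹)) p
      = a'' * ((a p.1 + b p.2)⁻¹ - (a p.1 - b p.2)⁻¹)
        + a' p.1 ^ 2 * (((a p.1 - b p.2) ^ 2)⁻¹ - ((a p.1 + b p.2) ^ 2)⁻¹) := by
  have hx := ha.comp_hasFDerivAt p (hasFDerivAt_fst (𝕜 := ℝ))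
  have hy := hb.comp_hasFDerivAt p (hasFDerivAt_snd (𝕜 := ℝ))
  have hsi := (hasDerivAt_inv hs).comp_hasFDerivAt p (hx.add hy)
  have hdi := (hasDerivAt_inv hd).comp_hasFDerivAt p (hx.sub hy)
  have hx' := ha'.comp_hasFDerivAt p (hasFDerivAt_fst (𝕜 := ℝ))
  refine (pdx_eq_of_hasFDerivAt (hx'.mul (hsi.sub hdi))).trans ?_
  simp only [Function.comp_apply, Pi.add_apply, Pi.sub_apply, add_apply, sub_apply, smul_apply,
    coe_fst', coe_snd', smul_eq_mul]
  ring

lemma pdy_mul_inv_add_inv {b'' : ℝ} (ha : HasDerivAt a (a' p.1) p.1)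
    (hb : HasDerivAt b (b' p.2) p.2) (hb' : HasDerivAt b' b'' p.2)
    (hs : a p.1 + b p.2 ≠ 0) (hd : a p.1 - b p.2 ≠ 0) :
    pdy (fun q : ℝ × ℝ => b' q.2 * ((a q.1 + b q.2)⁻¹ + (a q.1 - b q.2)⁻¹)) p
      = b'' * ((a p.1 + b p.2)⁻¹ + (a p.1 - b p.2)⁻¹)
        + b' p.2 ^ 2 * (((a p.1 - b p.2) ^ 2)⁻¹ - ((a p.1 + b p.2) ^ 2)⁻¹) := by
  have hx := ha.comp_hasFDerivAt p (hasFDerivAt_fst (𝕜 := ℝ))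
  have hy := hb.comp_hasFDerivAt p (hasFDerivAt_snd (𝕜 := ℝ))
  have hsi := (hasDerivAt_inv hs).comp_hasFDerivAt p (hx.add hy)
  have hdi := (hasDerivAt_inv hd).comp_hasFDerivAt p (hx.sub hy)
  have hy' := hb'.comp_hasFDerivAt p (hasFDerivAt_snd (𝕜 := ℝ))
  refine (pdy_eq_of_hasFDerivAt (hy'.mul (hsi.add hdi))).trans ?_
  simp only [Function.comp_apply, Pi.add_apply, Pi.sub_apply, add_apply, sub_apply, smul_apply,
    coe_fst', coe_snd', smul_eq_mul]
  ring

theorem lap_log_div {κ : ℝ} (ha : ∀ x, HasDerivAt a (a' x) x)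
    (ha' : ∀ x, HasDerivAt a' (κ * a x) x) (hb : ∀ y, HasDerivAt b (b' y) y)
    (hb' : ∀ y, HasDerivAt b' (κ * b y) y)
    (henergy : ∀ x y, a' x ^ 2 + b' y ^ 2 = κ * (a x ^ 2 + b y ^ 2))
    (hs : a p.1 + b p.2 ≠ 0) (hd : a p.1 - b p.2 ≠ 0) :
    lap (fun q : ℝ × ℝ => log ((a q.1 + b q.2) / (a q.1 - b q.2))) p
      = κ * sinh (2 * log ((a p.1 + b p.2) / (a p.1 - b p.2))) := by
  have hac : Continuous a := continuous_iff_continuousAt.2 fun x => (ha x).continuousAt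
  have hbc : Continuous b := continuous_iff_continuousAt.2 fun y => (hb y).continuousAt
  have hnear : ∀ᶠ q in 𝓝 p, a q.1 + b q.2 ≠ 0 ∧ a q.1 - b q.2 ≠ 0 :=
    (((hac.comp continuous_fst).add (hbc.comp continuous_snd)).continuousAt.eventually_ne hs).and
      (((hac.comp continuous_fst).sub (hbc.comp continuous_snd)).continuousAt.eventually_ne hd)
  have hlog : (fun q : ℝ × ℝ => log ((a q.1 + b q.2) / (a q.1 - b q.2))) =ᶠ[𝓝 p]
      fun q => log (a q.1 + b q.2) - log (a q.1 - b q.2) :=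
    hnear.mono fun q hq => log_div hq.1 hq.2
  have hx : pdx (fun q : ℝ × ℝ => log (a q.1 + b q.2) - log (a q.1 - b q.2)) =ᶠ[𝓝 p]
      fun q => a' q.1 * ((a q.1 + b q.2)⁻¹ - (a q.1 - b q.2)⁻¹) :=
    hnear.mono fun q hq => pdx_log_sub_log (ha _) (hb _) hq.1 hq.2
  have hy : pdy (fun q : ℝ × ℝ => log (a q.1 + b q.2) - log (a q.1 - b q.2)) =ᶠ[𝓝 p]
      fun q => b' q.2 * ((a q.1 + b q.2)⁻¹ + (a q.1 - b q.2)⁻¹) :=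
    hnear.mono fun q hq => pdy_log_sub_log (ha _) (hb _) hq.1 hq.2
  rw [lap_congr hlog, lap, (pdx_congr hx).eq_of_nhds, (pdy_congr hy).eq_of_nhds,
    pdx_mul_inv_sub_inv (ha _) (ha' _) (hb _) hs hd,
    pdy_mul_inv_add_inv (ha _) (hb _) (hb' _) hs hd,
    sinh_two_mul_log, show a' p.1 ^ 2 = κ * (a p.1 ^ 2 + b p.2 ^ 2) - b' p.2 ^ 2 by
      linarith [henergy p.1 p.2]]
  field_simp
  ring

end Separable

section SinhCoshCombination

noncomputable def sinhCoshComb (k α β t : ℝ) : ℝ := α * sinh (k * t) + β * cosh (k * t)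

variable (k α β t : ℝ)

lemma hasDerivAt_sinhCoshComb :
    HasDerivAt (sinhCoshComb k α β) (sinhCoshComb k (k * β) (k * α) t) t := by
  have hkt := (hasDerivAt_id' t).const_mul k
  refine ((hkt.sinh.const_mul α).add (hkt.cosh.const_mul β)).congr_deriv ?_
  simp only [sinhCoshComb]
  ring

lemma hasDerivAt_sinhCoshComb_deriv :
    HasDerivAt (sinhCoshComb k (k * β) (k * α)) (k ^ 2 * sinhCoshComb k α β t) t := by
  refine (hasDerivAt_sinhCoshComb k _ _ t).congr_deriv ?_
  simp only [sinhCoshComb]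
  ring

lemma sinhCoshComb_sq_sub_sq :
    sinhCoshComb k (k * β) (k * α) t ^ 2 - k ^ 2 * sinhCoshComb k α β t ^ 2
      = k ^ 2 * (α ^ 2 - β ^ 2) := by
  simp only [sinhCoshComb]
  linear_combination k ^ 2 * (α ^ 2 - β ^ 2) * cosh_sq_sub_sinh_sq (k * t)

end SinhCoshCombination

lemma sqrt_two_mul_sinh_lt_two_mul_cosh (t : ℝ) : √2 * sinh t < 2 * cosh t :=
  calc √2 * sinh t < √2 * cosh t := mul_lt_mul_of_pos_left (sinh_lt_cosh t) (by positivity)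
    _ ≤ 2 * cosh t :=
      mul_le_mul_of_nonneg_right (sqrt_le_iff.2 ⟨by norm_num, by norm_num⟩) (cosh_pos t).le

theorem stmt_18 (W : Set (ℝ × ℝ))
    (hW : W = {p : ℝ × ℝ | Real.sqrt 2 * |Real.sinh (Real.sqrt 2 * p.2)| <
      2 * Real.cosh (Real.sqrt 2 * p.1) - Real.sqrt 2 * Real.sinh (Real.sqrt 2 * p.1)})
    (w : ℝ × ℝ → ℝ)
    (hw : ∀ p : ℝ × ℝ, w p = 2 * artanh
      (Real.sqrt 2 * Real.sinh (Real.sqrt 2 * p.2) /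
       (Real.sqrt 2 * Real.sinh (Real.sqrt 2 * p.1) - 2 * Real.cosh (Real.sqrt 2 * p.1)))) :
    ∀ p ∈ W, lap w p = 2 * Real.sinh (2 * w p) := by
  have hk : √2 ^ 2 = 2 := sq_sqrt zero_le_two
  have ha_eq (x : ℝ) : sinhCoshComb √2 √2 (-2) x = √2 * sinh (√2 * x) - 2 * cosh (√2 * x) := by
    simp only [sinhCoshComb]
    ring
  have hb_eq (y : ℝ) : sinhCoshComb √2 √2 0 y = √2 * sinh (√2 * y) := by
    simp [sinhCoshComb]
  have hw' : w = fun q => log ((sinhCoshComb √2 √2 (-2) q.1 + sinhCoshComb √2 √2 0 q.2) /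
      (sinhCoshComb √2 √2 (-2) q.1 - sinhCoshComb √2 √2 0 q.2)) := by
    funext q
    rw [hw, two_mul_artanh_div (sub_neg.2 (sqrt_two_mul_sinh_lt_two_mul_cosh _)).ne, ha_eq, hb_eq]
  have henergy (x y : ℝ) : sinhCoshComb √2 (√2 * -2) (√2 * √2) x ^ 2 +
      sinhCoshComb √2 (√2 * 0) (√2 * √2) y ^ 2 =
      √2 ^ 2 * (sinhCoshComb √2 √2 (-2) x ^ 2 + sinhCoshComb √2 √2 0 y ^ 2) := by
    linear_combination sinhCoshComb_sq_sub_sq √2 √2 (-2) x + sinhCoshComb_sq_sub_sq √2 √2 0 y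
      + 2 * √2 ^ 2 * hk
  intro p hp
  rw [hW, Set.mem_ofPred_eq] at hp
  have hb_lt : |√2 * sinh (√2 * p.2)| < -(√2 * sinh (√2 * p.1) - 2 * cosh (√2 * p.1)) := by
    rw [abs_mul, abs_of_nonneg (sqrt_nonneg 2)]
    linarith
  obtain ⟨hd, hs⟩ := abs_lt.mp hb_lt
  have hlap := lap_log_div (fun x => hasDerivAt_sinhCoshComb _ _ _ x)
    (fun x => hasDerivAt_sinhCoshComb_deriv _ _ _ x) (fun y => hasDerivAt_sinhCoshComb _ _ _ y)
    (fun y => hasDerivAt_sinhCoshComb_deriv _ _ _ y) henergy (p := p)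
    (by rw [ha_eq, hb_eq]; linarith) (by rw [ha_eq, hb_eq]; linarith)
  rw [hk] at hlap
  subst hw'
  exact hlap
end

section
/- Let U ⊆ ℝ² be open, and let C, D : ℝ → ℝ be twice differentiable functions. Then the function θ(x,y) = arcsin(tanh(C(x)+D(y))) satisfies the elliptic sine-Gordon equation Δθ = −2 sin(2θ) at a point (x,y) ∈ U if and only if C''(x) + D''(y) = tanh(C(x)+D(y))·((C'(x))² + (D'(y))² − 4). -/
open Real ContinuousLinearMap

section Separated

variable {g C D : ℝ → ℝ}

theorem hasFDerivAt_comp_fst_add_snd {p : ℝ × ℝ} (hg : DifferentiableAt ℝ g (C p.1 + D p.2))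
    (hC : DifferentiableAt ℝ C p.1) (hD : DifferentiableAt ℝ D p.2) :
    HasFDerivAt (fun q : ℝ × ℝ => g (C q.1 + D q.2))
      (deriv g (C p.1 + D p.2) • (deriv C p.1 • fst ℝ ℝ ℝ + deriv D p.2 • snd ℝ ℝ ℝ)) p :=
  hg.hasDerivAt.comp_hasFDerivAt p <|
    (hC.hasDerivAt.comp_hasFDerivAt p hasFDerivAt_fst).add
      (hD.hasDerivAt.comp_hasFDerivAt p hasFDerivAt_snd)

variable (hg : Differentiable ℝ g) (hC : Differentiable ℝ C) (hD : Differentiable ℝ D)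
include hg hC hD

theorem pdx_comp_fst_add_snd :
    pdx (fun p => g (C p.1 + D p.2)) = fun p => deriv C p.1 * deriv g (C p.1 + D p.2) := by
  ext p
  simp [pdx, (hasFDerivAt_comp_fst_add_snd (hg _) (hC p.1) (hD p.2)).fderiv, mul_comm]

theorem pdy_comp_fst_add_snd :
    pdy (fun p => g (C p.1 + D p.2)) = fun p => deriv D p.2 * deriv g (C p.1 + D p.2) := by
  ext p
  simp [pdy, (hasFDerivAt_comp_fst_add_snd (hg _) (hC p.1) (hD p.2)).fderiv, mul_comm]

theorem lap_comp_fst_add_snd (hg' : Differentiable ℝ (deriv g))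
    (hC' : Differentiable ℝ (deriv C)) (hD' : Differentiable ℝ (deriv D)) (p : ℝ × ℝ) :
    lap (fun p => g (C p.1 + D p.2)) p =
      deriv g (C p.1 + D p.2) * (deriv (deriv C) p.1 + deriv (deriv D) p.2) +
        deriv (deriv g) (C p.1 + D p.2) * (deriv C p.1 ^ 2 + deriv D p.2 ^ 2) := by
  have hg'u := hasFDerivAt_comp_fst_add_snd (hg' _) (hC p.1) (hD p.2)
  have hC'x : HasFDerivAt (fun q : ℝ × ℝ => deriv C q.1) _ p :=
    (hC' p.1).hasDerivAt.comp_hasFDerivAt p (hasFDerivAt_fst (𝕜 := ℝ))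
  have hD'y : HasFDerivAt (fun q : ℝ × ℝ => deriv D q.2) _ p :=
    (hD' p.2).hasDerivAt.comp_hasFDerivAt p (hasFDerivAt_snd (𝕜 := ℝ))
  have hx : HasFDerivAt (fun q : ℝ × ℝ => deriv C q.1 * deriv g (C q.1 + D q.2)) _ p :=
    hC'x.mul hg'u
  have hy : HasFDerivAt (fun q : ℝ × ℝ => deriv D q.2 * deriv g (C q.1 + D q.2)) _ p :=
    hD'y.mul hg'u
  rw [lap, pdx_comp_fst_add_snd hg hC hD, pdy_comp_fst_add_snd hg hC hD, pdx, pdy,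
    hx.fderiv, hy.fderiv]
  simp only [smul_add, add_apply, smul_apply, coe_fst', smul_eq_mul, mul_one, coe_snd', mul_zero,
    add_zero, zero_add]
  ring

end Separated

namespace Real

theorem one_sub_tanh_sq (t : ℝ) : 1 - tanh t ^ 2 = (cosh t ^ 2)⁻¹ := by
  rw [tanh_eq_sinh_div_cosh]
  field_simp
  exact cosh_sq_sub_sinh_sq t

theorem hasDerivAt_tanh_s19 (t : ℝ) : HasDerivAt tanh (cosh t ^ 2)⁻¹ t := by
  have h := (hasDerivAt_sinh t).div (hasDerivAt_cosh t) (cosh_pos t).ne'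
  have e : sinh / cosh = tanh := funext fun s => (tanh_eq_sinh_div_cosh s).symm
  rwa [e, ← sq, ← sq, cosh_sq_sub_sinh_sq, one_div] at h

theorem cos_arcsin_tanh (t : ℝ) : cos (arcsin (tanh t)) = (cosh t)⁻¹ := by
  rw [cos_arcsin, one_sub_tanh_sq, sqrt_inv, sqrt_sq (cosh_pos t).le]

theorem sin_two_mul_arcsin_tanh (t : ℝ) : sin (2 * arcsin (tanh t)) = 2 * (tanh t / cosh t) := by
  rw [sin_two_mul, sin_arcsin (neg_one_lt_tanh t).le (tanh_lt_one t).le, cos_arcsin_tanh,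
    mul_assoc, div_eq_mul_inv]

theorem hasDerivAt_arcsin_tanh (t : ℝ) :
    HasDerivAt (fun s => arcsin (tanh s)) (cosh t)⁻¹ t := by
  have h := (hasDerivAt_arcsin (neg_one_lt_tanh t).ne' (tanh_lt_one t).ne).comp t
    (hasDerivAt_tanh_s19 t)
  rwa [← cos_arcsin, cos_arcsin_tanh, one_div, inv_inv, ← div_eq_mul_inv, pow_two,
    div_mul_cancel_left₀ (cosh_pos t).ne'] at h

theorem deriv_arcsin_tanh : deriv (fun s => arcsin (tanh s)) = fun t => (cosh t)⁻¹ :=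
  funext fun t => (hasDerivAt_arcsin_tanh t).deriv

theorem deriv_inv_cosh (t : ℝ) : deriv (fun s => (cosh s)⁻¹) t = -(tanh t / cosh t) := by
  have h : HasDerivAt (fun s => (cosh s)⁻¹) _ t := (hasDerivAt_cosh t).inv (cosh_pos t).ne'
  rw [h.deriv, tanh_eq_sinh_div_cosh]
  ring

end Real

theorem stmt_19_general
    (C D : ℝ → ℝ)
    (hC : Differentiable ℝ C) (hC' : Differentiable ℝ (deriv C))
    (hD : Differentiable ℝ D) (hD' : Differentiable ℝ (deriv D))
    (θ : ℝ × ℝ → ℝ)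
    (hθ : ∀ p : ℝ × ℝ, θ p = Real.arcsin (Real.tanh (C p.1 + D p.2)))
    (x y : ℝ) :
    lap θ (x, y) = -2 * Real.sin (2 * θ (x, y)) ↔
      deriv (deriv C) x + deriv (deriv D) y =
        Real.tanh (C x + D y) * ((deriv C x) ^ 2 + (deriv D y) ^ 2 - 4) := by
  obtain rfl : θ = fun p => arcsin (tanh (C p.1 + D p.2)) := funext hθ
  have hg : Differentiable ℝ fun s => arcsin (tanh s) :=
    fun t => (hasDerivAt_arcsin_tanh t).differentiableAt
  have hg' : Differentiable ℝ (deriv fun s => arcsin (tanh s)) := by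
    rw [deriv_arcsin_tanh]
    exact differentiable_cosh.inv fun t => (cosh_pos t).ne'
  rw [lap_comp_fst_add_snd hg hC hD hg' hC' hD', deriv_arcsin_tanh, deriv_inv_cosh,
    sin_two_mul_arcsin_tanh, ← mul_left_cancel_iff_of_pos (cosh_pos (C x + D y))]
  field_simp
  constructor <;> intro h <;> linarith

theorem stmt_19 (U : Set (ℝ × ℝ)) (hU : IsOpen U)
    (C D : ℝ → ℝ)
    (hC : Differentiable ℝ C) (hC' : Differentiable ℝ (deriv C))
    (hD : Differentiable ℝ D) (hD' : Differentiable ℝ (deriv D))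
    (θ : ℝ × ℝ → ℝ)
    (hθ : ∀ p : ℝ × ℝ, θ p = Real.arcsin (Real.tanh (C p.1 + D p.2)))
    (x y : ℝ) (hxy : (x, y) ∈ U) :
    lap θ (x, y) = -2 * Real.sin (2 * θ (x, y)) ↔
      deriv (deriv C) x + deriv (deriv D) y =
        Real.tanh (C x + D y) * ((deriv C x) ^ 2 + (deriv D y) ^ 2 - 4) :=
  stmt_19_general C D hC hC' hD hD' θ hθ x y
end
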